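/- arXiv:math/0511535 — 3 statements merged into one kernel-verified Lean document; each statement's English description precedes it below -/
import Mathlib

section
/- Let H be a finite-dimensional Hopf algebra over a field k with bijective antipode S. Let t ∈ H be a nonzero left integral, let α : H → k be an algebra homomorphism with t·h = α(h)·t for all h ∈ H, let Λ : H → k be a linear functional with Λ(t₁)·t₂ = 1, and set λ := Λ ∘ S. Then for all h, x ∈ H: λ(x·h) = α(h₂)·λ(S⁻²(h₁)·x); equivalently, h ⇀ λ = λ ↼ (α(h₂)·S⁻²(h₁)). -/
/-!
Write `S'` for the inverse of the antipode `S`. For a left integral `t`, the identity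
`∑ S(z₁) z₂ ⊗ z₃ = 1 ⊗ z` gives `(1 ⊗ z) Δt = (S z ⊗ 1) Δt`; applying `Λ ⊗ id` yields
`Λ(S(z) t₁) t₂ = z`. Hence `f ↦ f(t₁) t₂ : H* → H` is onto, so injective as `dim H* = dim H`.
Dually, `t h = α(h) t` and `∑ h₂ S'(h₁) ⊗ h₃ = 1 ⊗ h` give `Δt (w ⊗ 1) = Δt (1 ⊗ h)` for
`w = α(h₂) S'(h₁)`, whence `Λ(t₁ w) t₂ = h`. By injectivity `Λ(S(h) y) = Λ(y w)` for all `y`;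
put `y = S x`.
-/

open TensorProduct

variable {k H : Type*} [Field k] [Ring H] [HopfAlgebra k H]

/-- `swl f h = f(h₁) • h₂` in Sweedler notation. -/
noncomputable def swl (f : H →ₗ[k] k) : H →ₗ[k] H :=
  (TensorProduct.lid k H).toLinearMap ∘ₗ (f.rTensor H) ∘ₗ Coalgebra.comul

/-- `swr f h = f(h₂) • h₁` in Sweedler notation. -/
noncomputable def swr (f : H →ₗ[k] k) : H →ₗ[k] H :=
  (TensorProduct.rid k H).toLinearMap ∘ₗ (f.lTensor H) ∘ₗ Coalgebra.comul

/-- `sw2 f g h = f(h₁) * g(h₂)`, an element of `H`, in Sweedler notation. -/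
noncomputable def sw2 (f g : H →ₗ[k] H) : H →ₗ[k] H :=
  (LinearMap.mul' k H) ∘ₗ (TensorProduct.map f g) ∘ₗ Coalgebra.comul

/-- `sw2k f g h = f(h₁) * g(h₂)`, a scalar, in Sweedler notation. -/
noncomputable def sw2k (f g : H →ₗ[k] k) : H →ₗ[k] k :=
  (LinearMap.mul' k k) ∘ₗ (TensorProduct.map f g) ∘ₗ Coalgebra.comul

/-- `comul3 h = (h₁ ⊗ h₂) ⊗ h₃`, the iterated comultiplication `(Δ ⊗ id)Δ`. -/
noncomputable def comul3 : H →ₗ[k] (H ⊗[k] H) ⊗[k] H :=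
  (LinearMap.rTensor H Coalgebra.comul) ∘ₗ Coalgebra.comul

/-- `sw3 f g e h = f(h₁) * g(h₂) * e(h₃)`, an element of `H`, in Sweedler notation. -/
noncomputable def sw3 (f g e : H →ₗ[k] H) : H →ₗ[k] H :=
  (LinearMap.mul' k H) ∘ₗ
    (TensorProduct.map ((LinearMap.mul' k H) ∘ₗ TensorProduct.map f g) e) ∘ₗ comul3

open HopfAlgebra
open Coalgebra (Repr comul counit)
open scoped Coalgebra

section Coalgebra

variable {R C M ι : Type*} [CommSemiring R] [AddCommMonoid C] [Module R C] [Coalgebra R C]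
  [AddCommMonoid M] [Module R M]

lemma sum_counit_right_smul {a : C} (r : Repr R a ι) :
    ∑ i ∈ r.index, counit (R := R) (r.right i) • r.left i = a := by
  simpa only [map_sum, TensorProduct.rid_tmul, one_smul] using
    congr(TensorProduct.rid R C $(Coalgebra.sum_tmul_counit_eq r))

lemma sum_rTensor_comul_eq_tmul (φ : C →ₗ[R] C →ₗ[R] M) (m : M)
    (hφ : ∀ c, lift φ (comul c) = counit (R := R) c • m) {a : C} (r : Repr R a ι) :
    ∑ i ∈ r.index, (φ (r.left i)).rTensor C (comul (r.right i)) = m ⊗ₜ[R] a := by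
  have rTensor_apply_eq (x : C) (u : C ⊗[R] C) :
      (φ x).rTensor C u =
        (lift φ).rTensor C ((TensorProduct.assoc R C C C).symm (x ⊗ₜ u)) := by
    induction u using TensorProduct.induction_on with
    | zero => simp
    | tmul y z => simp
    | add u v hu hv => simp [tmul_add, hu, hv]
  have lift_comp_comul : lift φ ∘ₗ comul = LinearMap.toSpanSingleton R M m ∘ₗ counit := by
    ext c; simp [hφ]
  calc ∑ i ∈ r.index, (φ (r.left i)).rTensor C (comul (r.right i))
      = (lift φ).rTensor C
          ((TensorProduct.assoc R C C C).symm ((comul (R := R)).lTensor C (comul a))) := by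
        simp [← r.eq, map_sum, rTensor_apply_eq]
    _ = (LinearMap.toSpanSingleton R M m ∘ₗ counit).rTensor C (comul a) := by
        rw [Coalgebra.coassoc_symm_apply, ← LinearMap.rTensor_comp_apply, lift_comp_comul]
    _ = m ⊗ₜ[R] a := by simp [LinearMap.rTensor_comp_apply]

end Coalgebra

section TensorSquare

variable {R A : Type*} [CommSemiring R]

def sliceLeft [AddCommMonoid A] [Module R A] : (A →ₗ[R] R) →ₗ[R] A ⊗[R] A →ₗ[R] A :=
  (LinearMap.rTensorHom A).compr₂ (TensorProduct.lid R A).toLinearMap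

@[simp]
lemma sliceLeft_tmul [AddCommMonoid A] [Module R A] (f : A →ₗ[R] R) (a b : A) :
    sliceLeft f (a ⊗ₜ[R] b) = f a • b := by
  simp [sliceLeft]

variable [Semiring A] [Algebra R A] (f : A →ₗ[R] R) (u : A ⊗[R] A)

lemma tmul_one_mul_eq_rTensor_mulLeft (a : A) :
    (a ⊗ₜ[R] (1 : A)) * u = (LinearMap.mulLeft R a).rTensor A u := by
  induction u using TensorProduct.induction_on with
  | zero => simp
  | tmul x y => simp [Algebra.TensorProduct.tmul_mul_tmul]
  | add u v hu hv => simp [mul_add, hu, hv]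

lemma mul_tmul_one_eq_rTensor_mulRight (a : A) :
    u * (a ⊗ₜ[R] (1 : A)) = (LinearMap.mulRight R a).rTensor A u := by
  induction u using TensorProduct.induction_on with
  | zero => simp
  | tmul x y => simp [Algebra.TensorProduct.tmul_mul_tmul]
  | add u v hu hv => simp [add_mul, hu, hv]

lemma sliceLeft_tmul_one_mul (a : A) :
    sliceLeft f ((a ⊗ₜ[R] (1 : A)) * u) = sliceLeft (f ∘ₗ LinearMap.mulLeft R a) u := by
  induction u using TensorProduct.induction_on with
  | zero => simp
  | tmul x y => simp [Algebra.TensorProduct.tmul_mul_tmul]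
  | add u v hu hv => simp [mul_add, hu, hv]

lemma sliceLeft_one_tmul_mul (b : A) :
    sliceLeft f (((1 : A) ⊗ₜ[R] b) * u) = b * sliceLeft f u := by
  induction u using TensorProduct.induction_on with
  | zero => simp
  | tmul x y => simp [Algebra.TensorProduct.tmul_mul_tmul]
  | add u v hu hv => simp [mul_add, hu, hv]

lemma sliceLeft_mul_tmul_one (a : A) :
    sliceLeft f (u * (a ⊗ₜ[R] (1 : A))) = sliceLeft (f ∘ₗ LinearMap.mulRight R a) u := by
  induction u using TensorProduct.induction_on with
  | zero => simp
  | tmul x y => simp [Algebra.TensorProduct.tmul_mul_tmul]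
  | add u v hu hv => simp [add_mul, hu, hv]

lemma sliceLeft_mul_one_tmul (b : A) :
    sliceLeft f (u * ((1 : A) ⊗ₜ[R] b)) = sliceLeft f u * b := by
  induction u using TensorProduct.induction_on with
  | zero => simp
  | tmul x y => simp [Algebra.TensorProduct.tmul_mul_tmul]
  | add u v hu hv => simp [add_mul, hu, hv]

end TensorSquare

section HopfAlgebra

variable {R A ι : Type*} [CommSemiring R] [Semiring A] [HopfAlgebra R A]

lemma sum_antipode_tmul_one_mul_comul {a : A} (r : Repr R a ι) :
    ∑ i ∈ r.index, (antipode R (r.left i) ⊗ₜ[R] (1 : A)) * comul (r.right i) = 1 ⊗ₜ[R] a := by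
  simp only [tmul_one_mul_eq_rTensor_mulLeft]
  refine sum_rTensor_comul_eq_tmul (LinearMap.mul R A ∘ₗ antipode R) 1 (fun c => ?_) r
  have lift_eq : lift (LinearMap.mul R A ∘ₗ antipode R) =
      LinearMap.mul' R A ∘ₗ (antipode R).rTensor A := by
    ext; simp
  rw [lift_eq, LinearMap.comp_apply, mul_antipode_rTensor_comul_apply,
    Algebra.algebraMap_eq_smul_one]

variable (S' : A →ₗ[R] A)
  (hl : Function.LeftInverse S' (antipode R)) (hr : Function.RightInverse S' (antipode R))
include hl hr

lemma lift_flip_mul_comp_comul_eq_counit_smul (c : A) :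
    lift ((LinearMap.mul R A).flip ∘ₗ S') (comul c) = counit (R := R) c • 1 := by
  have antipode_comp_lift : antipode R ∘ₗ lift ((LinearMap.mul R A).flip ∘ₗ S') =
      LinearMap.mul' R A ∘ₗ (antipode R).lTensor A := by
    ext x y; simp [antipode_mul_antidistrib, hr x]
  apply hl.injective
  rw [← LinearMap.comp_apply (antipode R), antipode_comp_lift, LinearMap.comp_apply,
    mul_antipode_lTensor_comul_apply, map_smul, antipode_one, Algebra.algebraMap_eq_smul_one]

lemma sum_comul_mul_antipode_inv_tmul_one {a : A} (r : Repr R a ι) :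
    ∑ i ∈ r.index, comul (r.right i) * (S' (r.left i) ⊗ₜ[R] (1 : A)) = 1 ⊗ₜ[R] a := by
  simp only [mul_tmul_one_eq_rTensor_mulRight]
  exact sum_rTensor_comul_eq_tmul ((LinearMap.mul R A).flip ∘ₗ S') 1
    (lift_flip_mul_comp_comul_eq_counit_smul S' hl hr) r

end HopfAlgebra

lemma one_tmul_mul_comul_of_mul_eq_counit_smul {R A : Type*} [CommSemiring R] [Semiring A]
    [HopfAlgebra R A] {t : A} (htl : ∀ h : A, h * t = counit (R := R) h • t) (z : A) :
    ((1 : A) ⊗ₜ[R] z) * comul t = (antipode R z ⊗ₜ[R] (1 : A)) * comul t := by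
  let r := ℛ R z
  calc ((1 : A) ⊗ₜ[R] z) * comul t
      = ∑ i ∈ r.index, (antipode R (r.left i) ⊗ₜ[R] (1 : A)) * comul (r.right i * t) := by
        simp [← sum_antipode_tmul_one_mul_comul r, Finset.sum_mul, Bialgebra.comul_mul, mul_assoc]
    _ = ∑ i ∈ r.index,
          counit (R := R) (r.right i) • ((antipode R (r.left i) ⊗ₜ[R] (1 : A)) * comul t) := by
        simp [htl]
    _ = (antipode R z ⊗ₜ[R] (1 : A)) * comul t := by
        simp only [← smul_mul_assoc, ← Finset.sum_mul, TensorProduct.smul_tmul',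
          ← TensorProduct.sum_tmul, ← map_smul, ← map_sum, sum_counit_right_smul]

lemma swl_apply_eq_sliceLeft (f : H →ₗ[k] k) (a : H) : swl f a = sliceLeft f (comul a) := rfl

lemma swr_eq_sum {ι : Type*} (f : H →ₗ[k] k) {a : H} (r : Repr k a ι) :
    swr f a = ∑ i ∈ r.index, f (r.right i) • r.left i := by
  simp [swr, ← r.eq, map_sum]

lemma sw2k_apply_eq_apply_swr (f g : H →ₗ[k] k) (h : H) : sw2k f g h = f (swr g h) := by
  simp only [sw2k, swr, LinearMap.comp_apply]
  induction comul (R := k) h using TensorProduct.induction_on with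
  | zero => simp
  | tmul x y => simp [mul_comm]
  | add u v hu hv => simp [hu, hv]

lemma injective_swl_apply_of_surjective [FiniteDimensional k H] {t : H}
    (hsurj : Function.Surjective fun f : H →ₗ[k] k => swl f t) :
    Function.Injective fun f : H →ₗ[k] k => swl f t :=
  (LinearMap.injective_iff_surjective_of_finrank_eq_finrank
    (f := (sliceLeft (R := k) (A := H)).flip (comul t)) Subspace.dual_finrank_eq).mpr hsurj

lemma swl_comp_mulLeft_antipode {t : H} (htl : ∀ h : H, h * t = counit (R := k) h • t)
    {Λ : H →ₗ[k] k} (hΛ : swl Λ t = 1) (z : H) :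
    swl (Λ ∘ₗ LinearMap.mulLeft k (antipode k z)) t = z := by
  rw [swl_apply_eq_sliceLeft, ← sliceLeft_tmul_one_mul,
    ← one_tmul_mul_comul_of_mul_eq_counit_smul htl, sliceLeft_one_tmul_mul,
    ← swl_apply_eq_sliceLeft, hΛ, mul_one]

section RightCharacter

variable {t : H} (α : H →ₗ[k] k) (hα : ∀ h : H, t * h = α h • t) (S' : H →ₗ[k] H)
  (hl : Function.LeftInverse S' (antipode k)) (hr : Function.RightInverse S' (antipode k))
include hα hl hr

lemma comul_mul_antipode_inv_swr_tmul_one (h : H) :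
    comul t * (S' (swr α h) ⊗ₜ[k] (1 : H)) = comul t * ((1 : H) ⊗ₜ[k] h) := by
  let r := ℛ k h
  calc comul t * (S' (swr α h) ⊗ₜ[k] (1 : H))
      = ∑ i ∈ r.index, α (r.right i) • (comul t * (S' (r.left i) ⊗ₜ[k] (1 : H))) := by
        simp [swr_eq_sum α r, TensorProduct.sum_tmul, Finset.mul_sum, ← TensorProduct.smul_tmul']
    _ = ∑ i ∈ r.index, comul (t * r.right i) * (S' (r.left i) ⊗ₜ[k] (1 : H)) := by
        simp [hα]
    _ = comul t * ((1 : H) ⊗ₜ[k] h) := by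
        simp only [Bialgebra.comul_mul, mul_assoc, ← Finset.mul_sum,
          sum_comul_mul_antipode_inv_tmul_one S' hl hr r]

lemma swl_comp_mulRight_antipode_inv_swr {Λ : H →ₗ[k] k} (hΛ : swl Λ t = 1) (h : H) :
    swl (Λ ∘ₗ LinearMap.mulRight k (S' (swr α h))) t = h := by
  rw [swl_apply_eq_sliceLeft, ← sliceLeft_mul_tmul_one,
    comul_mul_antipode_inv_swr_tmul_one α hα S' hl hr, sliceLeft_mul_one_tmul,
    ← swl_apply_eq_sliceLeft, hΛ, one_mul]

end RightCharacter

theorem statement4_general [FiniteDimensional k H]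
    (S' : H →ₗ[k] H)
    (hS'l : ∀ x : H, S' (HopfAlgebra.antipode (R := k) x) = x)
    (hS'r : ∀ x : H, HopfAlgebra.antipode (R := k) (S' x) = x)
    (t : H)
    (htl : ∀ h : H, h * t = Coalgebra.counit (R := k) h • t)
    (α : H →ₐ[k] k) (hα : ∀ h : H, t * h = α h • t)
    (Λ : H →ₗ[k] k) (hΛ : swl Λ t = 1) :
    ∀ h x : H,
      (Λ ∘ₗ HopfAlgebra.antipode (R := k)) (x * h) =
        sw2k ((Λ ∘ₗ HopfAlgebra.antipode (R := k)) ∘ₗ (LinearMap.mulRight k x) ∘ₗ S' ∘ₗ S')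
          α.toLinearMap h := by
  intro h x
  have hinj := injective_swl_apply_of_surjective
    fun z => ⟨_, swl_comp_mulLeft_antipode htl hΛ z⟩
  have key : Λ ∘ₗ LinearMap.mulLeft k (antipode k h) =
      Λ ∘ₗ LinearMap.mulRight k (S' (swr α.toLinearMap h)) := hinj <| by
    simp only [swl_comp_mulLeft_antipode htl hΛ,
      swl_comp_mulRight_antipode_inv_swr α.toLinearMap hα S' hS'l hS'r hΛ]
  rw [sw2k_apply_eq_apply_swr]
  simpa [antipode_mul_antidistrib, hS'r] using LinearMap.congr_fun key (antipode k x)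

/-- `H` finite-dimensional Hopf algebra over `k` with bijective antipode
`S` (linear inverse `S'`), `t ≠ 0` a left integral, `α : H → k` an algebra map with
`t·h = α(h)·t`, `Λ : H → k` with `Λ(t₁)·t₂ = 1`, and `λ := Λ ∘ S`.  Then for all `h, x`:
`λ(x·h) = α(h₂)·λ(S⁻²(h₁)·x)`. -/
theorem statement4 [FiniteDimensional k H]
    (S' : H →ₗ[k] H)
    (hS'l : ∀ x : H, S' (HopfAlgebra.antipode (R := k) x) = x)
    (hS'r : ∀ x : H, HopfAlgebra.antipode (R := k) (S' x) = x)
    (t : H) (ht0 : t ≠ 0)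
    (htl : ∀ h : H, h * t = Coalgebra.counit (R := k) h • t)
    (α : H →ₐ[k] k) (hα : ∀ h : H, t * h = α h • t)
    (Λ : H →ₗ[k] k) (hΛ : swl Λ t = 1) :
    ∀ h x : H,
      (Λ ∘ₗ HopfAlgebra.antipode (R := k)) (x * h) =
        sw2k ((Λ ∘ₗ HopfAlgebra.antipode (R := k)) ∘ₗ (LinearMap.mulRight k x) ∘ₗ S' ∘ₗ S')
          α.toLinearMap h :=
  statement4_general S' hS'l hS'r t htl α hα Λ hΛ
end

section
/- Let H be a finite-dimensional Hopf algebra over a field k with bijective antipode S. Let t ∈ H be a nonzero left integral, let Λ : H → k be a nonzero right integral for H in H⁎ (Λ(h₁)·h₂ = Λ(h)·1 for all h ∈ H), and let g ∈ H be a grouplike element with x₁·Λ(x₂) = Λ(x)·g for all x ∈ H. Then t is cocommutative (t₁ ⊗ t₂ = t₂ ⊗ t₁ in H ⊗ H) if and only if S² = id_H and g = 1. -/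
/-!
Helper definitions for Sweedler-notation expressions in a Hopf algebra `H` over a field `k`.
-/

open TensorProduct

variable {k H : Type*} [Field k] [Ring H] [HopfAlgebra k H]

/-!
Write `u = Δt`. Because `t` is a left integral, `Δ(h) u = ε(h) u`. In the convolution algebra
`Hom(H, H ⊗ H)` one has `(ι₁ ∘ S) * Δ = ι₂` for the inclusions `ι₁ h = h ⊗ 1`, `ι₂ h = 1 ⊗ h`;
multiplying on the right by `u` turns `Δ` into the unit, whence `(S h ⊗ 1) u = (1 ⊗ h) u`.
Slanting with `Λ` on either side, the two conditions on `Λ` become `Λ(S(h) t₁) t₂ = Λ(t) h` and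
`Λ(h t₂) t₁ = Λ(t) S(h) g`.

If `Λ(t) = 0`, the second identity makes `Λ` vanish on the left ideal generated by the slices
`f(t₁) t₂`, which contains `f(t) 1 = f(t₁) S(t₂) t₃`; so `Λ(t) ≠ 0`. By the first identity the
functionals `Λ(S(h) ·)` are then pairwise distinct, hence exhaust `H*` by dimension count, and
cocommutativity of `t` amounts to `S²(h) g = h` for all `h`, i.e. to `S² = id` and `g = 1`.
-/

namespace TensorProduct

section Module

variable {R M N : Type*} [CommSemiring R] [AddCommMonoid M] [Module R M]
  [AddCommMonoid N] [Module R N]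

noncomputable def slantLeft (f : Module.Dual R M) : M ⊗[R] N →ₗ[R] N :=
  TensorProduct.lid R N ∘ₗ f.rTensor N

noncomputable def slantRight (f : Module.Dual R N) : M ⊗[R] N →ₗ[R] M :=
  TensorProduct.rid R M ∘ₗ f.lTensor M

@[simp] lemma slantLeft_tmul (f : Module.Dual R M) (m : M) (n : N) :
    slantLeft f (m ⊗ₜ[R] n) = f m • n := by
  simp [slantLeft]

@[simp] lemma slantRight_tmul (f : Module.Dual R N) (m : M) (n : N) :
    slantRight f (m ⊗ₜ[R] n) = f n • m := by
  simp [slantRight]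

lemma slantLeft_comm (f : Module.Dual R N) (v : M ⊗[R] N) :
    slantLeft f (TensorProduct.comm R M N v) = slantRight f v := by
  induction v using TensorProduct.induction_on with
  | zero => simp
  | tmul m n => simp
  | add v w hv hw => simp [hv, hw]

lemma apply_slantLeft (f : Module.Dual R M) (φ : Module.Dual R N) (v : M ⊗[R] N) :
    φ (slantLeft f v) = f (slantRight φ v) := by
  induction v using TensorProduct.induction_on with
  | zero => simp
  | tmul m n => simp [mul_comm]
  | add v w hv hw => simp [hv, hw]

lemma sum_tmul_slantLeft_coord {ι : Type*} [Fintype ι] (B : Module.Basis ι R M) (v : M ⊗[R] N) :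
    ∑ i, B i ⊗ₜ[R] slantLeft (B.coord i) v = v := by
  induction v using TensorProduct.induction_on with
  | zero => simp
  | tmul m n =>
    simp only [slantLeft_tmul, Module.Basis.coord_apply, ← TensorProduct.smul_tmul,
      ← TensorProduct.sum_tmul, B.sum_repr]
  | add v w hv hw => simp [TensorProduct.tmul_add, Finset.sum_add_distrib, hv, hw]

variable [Module.Free R M] [Module.Finite R M]

lemma ext_slantLeft {v w : M ⊗[R] N} (h : ∀ f : Module.Dual R M, slantLeft f v = slantLeft f w) :
    v = w := by
  let B := Module.Free.chooseBasis R M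
  rw [← sum_tmul_slantLeft_coord B v, ← sum_tmul_slantLeft_coord B w]
  simp only [h]

lemma mul'_map_mem_span_range_slantLeft {A : Type*} [Semiring A] [Algebra R A]
    (D : M →ₗ[R] A) (v : M ⊗[R] A) :
    LinearMap.mul' R A (TensorProduct.map D LinearMap.id v) ∈
      Submodule.span A (Set.range fun f : Module.Dual R M => slantLeft f v) := by
  let B := Module.Free.chooseBasis R M
  have hv : LinearMap.mul' R A (TensorProduct.map D LinearMap.id v) =
      ∑ i, D (B i) * slantLeft (B.coord i) v := by
    conv_lhs => rw [← sum_tmul_slantLeft_coord B v]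
    simp
  rw [hv]
  exact Submodule.sum_mem _ fun i _ => Submodule.smul_mem _ _ (Submodule.subset_span ⟨_, rfl⟩)

end Module

section Algebra

variable {R A B : Type*} [CommSemiring R] [Semiring A] [Algebra R A] [Semiring B] [Algebra R B]

lemma slantLeft_tmul_one_mul (f : Module.Dual R A) (x : A) (v : A ⊗[R] B) :
    slantLeft f ((x ⊗ₜ[R] (1 : B)) * v) = slantLeft (f ∘ₗ LinearMap.mulLeft R x) v := by
  induction v using TensorProduct.induction_on with
  | zero => simp
  | tmul a b => simp [Algebra.TensorProduct.tmul_mul_tmul]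
  | add v w hv hw => simp [mul_add, hv, hw]

lemma slantLeft_one_tmul_mul (f : Module.Dual R A) (x : B) (v : A ⊗[R] B) :
    slantLeft f (((1 : A) ⊗ₜ[R] x) * v) = x * slantLeft f v := by
  induction v using TensorProduct.induction_on with
  | zero => simp
  | tmul a b => simp [Algebra.TensorProduct.tmul_mul_tmul]
  | add v w hv hw => simp [mul_add, hv, hw]

lemma slantRight_one_tmul_mul (f : Module.Dual R B) (x : B) (v : A ⊗[R] B) :
    slantRight f (((1 : A) ⊗ₜ[R] x) * v) = slantRight (f ∘ₗ LinearMap.mulLeft R x) v := by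
  induction v using TensorProduct.induction_on with
  | zero => simp
  | tmul a b => simp [Algebra.TensorProduct.tmul_mul_tmul]
  | add v w hv hw => simp [mul_add, hv, hw]

lemma slantRight_tmul_one_mul (f : Module.Dual R B) (x : A) (v : A ⊗[R] B) :
    slantRight f ((x ⊗ₜ[R] (1 : B)) * v) = x * slantRight f v := by
  induction v using TensorProduct.induction_on with
  | zero => simp
  | tmul a b => simp [Algebra.TensorProduct.tmul_mul_tmul]
  | add v w hv hw => simp [mul_add, hv, hw]

end Algebra

end TensorProduct

section Convolution

open Coalgebra WithConv

variable {R A C : Type*} [CommSemiring R] [Semiring A] [Algebra R A]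
  [AddCommMonoid C] [Module R C] [Coalgebra R C]

lemma LinearMap.mulRight_comp_convMul (f g : WithConv (C →ₗ[R] A)) (a : A) :
    toConv (LinearMap.mulRight R a ∘ₗ (f * g).ofConv) =
      f * toConv (LinearMap.mulRight R a ∘ₗ g.ofConv) := by
  ext c
  simp [(ℛ R c).convMul_apply, mul_assoc]

end Convolution

section Hopf

open Coalgebra HopfAlgebra WithConv
open Algebra.TensorProduct (includeLeft includeRight)

variable {R A : Type*} [CommSemiring R] [Semiring A] [HopfAlgebra R A]

local notation "inclLeft" => AlgHom.toLinearMap (includeLeft (R := R) (S := R) (A := A) (B := A))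
local notation "inclRight" => AlgHom.toLinearMap (includeRight (R := R) (A := A) (B := A))

lemma includeLeft_convMul_includeRight :
    toConv inclLeft * toConv inclRight = toConv (comul (R := R) (A := A)) := by
  ext c
  rw [(ℛ R c).convMul_apply, ← (ℛ R c).eq]
  simp [Algebra.TensorProduct.tmul_mul_tmul]

lemma includeLeft_comp_antipode_convMul_comul :
    toConv (inclLeft ∘ₗ antipode R) * toConv (comul (R := R) (A := A)) = toConv inclRight := by
  have hinv : toConv (inclLeft ∘ₗ antipode R) * toConv inclLeft = 1 := by
    have := LinearMap.algHom_comp_convMul_distrib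
      (includeLeft : A →ₐ[R] A ⊗[R] A) (toConv (antipode R)) (toConv .id)
    rw [LinearMap.antipode_mul_id] at this
    apply WithConv.ofConv_injective
    refine this.symm.trans ?_
    ext c
    simp
  rw [← includeLeft_convMul_includeRight, ← mul_assoc, hinv, one_mul]

lemma antipode_tmul_one_mul_eq_one_tmul_mul (u : A ⊗[R] A)
    (hu : ∀ y : A, comul (R := R) y * u = counit (R := R) y • u) (h : A) :
    (antipode R h ⊗ₜ[R] (1 : A)) * u = ((1 : A) ⊗ₜ[R] h) * u := by
  let ρ := LinearMap.mulRight R u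
  let convUnit := (1 : WithConv (A →ₗ[R] A ⊗[R] A)).ofConv
  have hcomul : toConv (ρ ∘ₗ comul) = toConv (ρ ∘ₗ convUnit) := by
    ext y
    simp [ρ, convUnit, hu, Algebra.smul_def]
  have key : toConv (ρ ∘ₗ inclRight) = toConv (ρ ∘ₗ inclLeft ∘ₗ antipode R) :=
    calc toConv (ρ ∘ₗ inclRight)
        = toConv (ρ ∘ₗ (toConv (inclLeft ∘ₗ antipode R) * toConv comul).ofConv) := by
          rw [includeLeft_comp_antipode_convMul_comul]
      _ = toConv (inclLeft ∘ₗ antipode R) * toConv (ρ ∘ₗ comul) :=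
          LinearMap.mulRight_comp_convMul _ _ _
      _ = toConv (inclLeft ∘ₗ antipode R) * toConv (ρ ∘ₗ convUnit) := by rw [hcomul]
      _ = toConv (ρ ∘ₗ inclLeft ∘ₗ antipode R) := by
          rw [← LinearMap.mulRight_comp_convMul, mul_one]
  simpa [ρ] using (congrArg (fun F => F h) key).symm

end Hopf

section Bialgebra

open Coalgebra

variable {R A : Type*} [CommSemiring R] [Semiring A] [Bialgebra R A]

variable (R) in
def IsLeftIntegral (t : A) : Prop :=
  ∀ h : A, h * t = counit (R := R) h • t

lemma IsLeftIntegral.comul_mul_comul {t : A} (ht : IsLeftIntegral R t) (y : A) :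
    comul (R := R) y * comul t = counit (R := R) y • comul (R := R) t := by
  rw [← Bialgebra.comul_mul, ht y, map_smul]

end Bialgebra

section HopfAlgebra

open Coalgebra HopfAlgebra WithConv TensorProduct

variable {R A : Type*} [CommSemiring R] [Semiring A] [HopfAlgebra R A] {t : A}

lemma IsLeftIntegral.antipode_tmul_one_mul_comul (ht : IsLeftIntegral R t) (h : A) :
    (antipode R h ⊗ₜ[R] (1 : A)) * comul t = ((1 : A) ⊗ₜ[R] h) * comul t :=
  antipode_tmul_one_mul_eq_one_tmul_mul _ ht.comul_mul_comul h

lemma IsLeftIntegral.slantLeft_comp_mulLeft_antipode (ht : IsLeftIntegral R t)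
    {Λ : Module.Dual R A} (hΛ : ∀ h : A, slantLeft Λ (comul (R := R) h) = Λ h • (1 : A)) (h : A) :
    slantLeft (Λ ∘ₗ LinearMap.mulLeft R (antipode R h)) (comul t) = Λ t • h := by
  rw [← slantLeft_tmul_one_mul, ht.antipode_tmul_one_mul_comul, slantLeft_one_tmul_mul, hΛ,
    mul_smul_comm, mul_one]

lemma IsLeftIntegral.slantRight_comp_mulLeft (ht : IsLeftIntegral R t)
    {Λ : Module.Dual R A} {g : A} (hΛ : ∀ h : A, slantRight Λ (comul (R := R) h) = Λ h • g)
    (h : A) :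
    slantRight (Λ ∘ₗ LinearMap.mulLeft R h) (comul t) = Λ t • (antipode R h * g) := by
  rw [← slantRight_one_tmul_mul, ← ht.antipode_tmul_one_mul_comul, slantRight_tmul_one_mul, hΛ,
    mul_smul_comm]

lemma smul_one_mem_span_range_slantLeft_comul [Module.Free R A] [Module.Finite R A]
    (t : A) (f : Module.Dual R A) :
    f t • (1 : A) ∈
      Submodule.span A (Set.range fun f : Module.Dual R A => slantLeft f (comul t)) := by
  have hconv : (toConv (Algebra.linearMap R A ∘ₗ f) * toConv (antipode R) * toConv .id :
      WithConv (A →ₗ[R] A)) t = f t • (1 : A) := by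
    rw [mul_assoc, LinearMap.antipode_mul_id, mul_one]
    simp [Algebra.algebraMap_eq_smul_one]
  rw [← hconv, LinearMap.convMul_apply]
  exact mul'_map_mem_span_range_slantLeft _ _

end HopfAlgebra

section FiniteDimensional

open Coalgebra HopfAlgebra

lemma IsLeftIntegral.dual_apply_ne_zero [FiniteDimensional k H] {t : H} (ht : IsLeftIntegral k t)
    (ht0 : t ≠ 0) {Λ : Module.Dual k H} (hΛ0 : Λ ≠ 0) {g : H}
    (hΛ : ∀ h : H, slantRight Λ (comul (R := k) h) = Λ h • g) :
    Λ t ≠ 0 := by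
  intro hΛt
  have hvanish : ∀ w ∈ Submodule.span H
      (Set.range fun f : Module.Dual k H => slantLeft f (comul t)), ∀ a : H, Λ (a * w) = 0 := by
    intro w hw
    induction hw using Submodule.span_induction with
    | mem w hw =>
      obtain ⟨f, rfl⟩ := hw
      intro a
      rw [← LinearMap.mulLeft_apply (R := k), ← LinearMap.comp_apply, apply_slantLeft,
        ht.slantRight_comp_mulLeft hΛ, hΛt, zero_smul, map_zero]
    | zero => simp
    | add v w _ _ hv hw => simp [mul_add, hv, hw]
    | smul b w _ hw => simp [← mul_assoc, hw]
  obtain ⟨f, hf⟩ := Module.Projective.exists_dual_eq_one k ht0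
  apply hΛ0
  ext a
  simpa [hf] using hvanish _ (smul_one_mem_span_range_slantLeft_comul t f) a

lemma IsLeftIntegral.surjective_comp_mulLeft_antipode [FiniteDimensional k H] {t : H}
    (ht : IsLeftIntegral k t) {Λ : Module.Dual k H}
    (hΛ : ∀ h : H, slantLeft Λ (comul (R := k) h) = Λ h • (1 : H)) (hΛt : Λ t ≠ 0) :
    Function.Surjective fun h : H => Λ ∘ₗ LinearMap.mulLeft k (antipode k h) := by
  let φ : H →ₗ[k] Module.Dual k H := (LinearMap.mul k H).compr₂ Λ ∘ₗ antipode k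
  have hφ : Function.Injective φ := fun a b hab => smul_right_injective H hΛt <| by
    dsimp only
    rw [← ht.slantLeft_comp_mulLeft_antipode hΛ, ← ht.slantLeft_comp_mulLeft_antipode hΛ]
    exact congrArg (fun f => slantLeft f (comul (R := k) t)) hab
  exact (LinearMap.injective_iff_surjective_of_finrank_eq_finrank
    (Subspace.dual_finrank_eq (K := k) (V := H)).symm).mp hφ

end FiniteDimensional

theorem statement8_general [FiniteDimensional k H]
    (t : H) (ht0 : t ≠ 0)
    (htl : ∀ h : H, h * t = Coalgebra.counit (R := k) h • t)
    (Λ : H →ₗ[k] k) (hΛ0 : Λ ≠ 0)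
    (hΛr : ∀ h : H, swl Λ h = Λ h • (1 : H))
    (g : H)
    (hgΛ : ∀ x : H, swr Λ x = Λ x • g) :
    (TensorProduct.comm k H H) (Coalgebra.comul (R := k) t) = Coalgebra.comul (R := k) t ↔
      ((∀ h : H, HopfAlgebra.antipode (R := k) (HopfAlgebra.antipode (R := k) h) = h) ∧
        g = 1) := by
  have ht : IsLeftIntegral k t := htl
  have hΛt : Λ t ≠ 0 := ht.dual_apply_ne_zero ht0 hΛ0 hgΛ
  have hL := ht.slantLeft_comp_mulLeft_antipode hΛr
  have hR := ht.slantRight_comp_mulLeft hgΛ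
  constructor
  · intro hcomm
    have hS2g : ∀ h : H, HopfAlgebra.antipode k (HopfAlgebra.antipode k h) * g = h :=
      fun h => smul_right_injective H hΛt <| by
        dsimp only
        rw [← hR, ← slantLeft_comm, hcomm, hL]
    have hg : g = 1 := by simpa [HopfAlgebra.antipode_one] using hS2g 1
    exact ⟨fun h => by simpa [hg] using hS2g h, hg⟩
  · rintro ⟨hS2, rfl⟩
    refine ext_slantLeft fun f => ?_
    obtain ⟨h, rfl⟩ := ht.surjective_comp_mulLeft_antipode hΛr hΛt f
    rw [slantLeft_comm, hR, hS2, mul_one, hL]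

/-- `H` finite-dimensional Hopf algebra over `k` with bijective antipode,
`t ≠ 0` a left integral in `H`, `Λ ≠ 0` a right integral for `H` in `H⁎`, and `g`
grouplike with `x₁·Λ(x₂) = Λ(x)·g`.  Then `t` is cocommutative iff `S² = id` and `g = 1`. -/
theorem statement8 [FiniteDimensional k H]
    (hS : Function.Bijective ⇑(HopfAlgebra.antipode (R := k) (A := H)))
    (t : H) (ht0 : t ≠ 0)
    (htl : ∀ h : H, h * t = Coalgebra.counit (R := k) h • t)
    (Λ : H →ₗ[k] k) (hΛ0 : Λ ≠ 0)
    (hΛr : ∀ h : H, swl Λ h = Λ h • (1 : H))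
    (g : H) (hg : Coalgebra.comul (R := k) g = g ⊗ₜ[k] g)
    (hgε : Coalgebra.counit (R := k) g = 1)
    (hgΛ : ∀ x : H, swr Λ x = Λ x • g) :
    (TensorProduct.comm k H H) (Coalgebra.comul (R := k) t) = Coalgebra.comul (R := k) t ↔
      ((∀ h : H, HopfAlgebra.antipode (R := k) (HopfAlgebra.antipode (R := k) h) = h) ∧
        g = 1) :=
  statement8_general t ht0 htl Λ hΛ0 hΛr g hgΛ
end

section
/- Let H be a Hopf algebra over a field k with antipode S, and let λ : H → k be a left integral for H in H⁎ (h₁·λ(h₂) = λ(h)·1 for all h ∈ H) such that λ(h₂·S(h₁)) = ε(h) for all h ∈ H. Then λ(1) = 1 and H is involutory, i.e. S²(h) = h for all h ∈ H. -/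
/-!
The antipode is an anti-coalgebra map: in the convolution algebra `Hom(H, H ⊗ H)`, with
`ι₁ a = a ⊗ 1` and `ι₂ a = 1 ⊗ a`, one has `Δ = ι₁ * ι₂` and `(S ⊗ S) τ Δ = ι₂ S * ι₁ S`, so the
latter is a left inverse of `Δ`, whose right inverse is `Δ ∘ S`.

Applying the left integral property `h₁ λ(h₂) = λ(h) 1` at `S h` shows that `λ ∘ S` is a right
integral; evaluating `∑ λ(S h₁) λ(h₂)` in two ways then gives `λ ∘ S = λ`, since `λ 1 = 1` (the
hypothesis at `h = 1`). Let `p = S² * S`. As `S` is antimultiplicative, `p(h) = S(h₂ S(h₁))`, so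
`λ ∘ p = ε`. Since `Δ ∘ p = ι₁ S² * ι₂ p * ι₁ S`, the left integral property at `p(h)` reads
`λ(p(h)) 1 = (S² * (λ ∘ p) * S)(h)`, i.e. `1 = p` in `Hom(H, H)`, and then
`S² = S² * (S * id) = p * id = id`.
-/

open TensorProduct

variable {k H : Type*} [Field k] [Ring H] [HopfAlgebra k H]

open Coalgebra HopfAlgebra WithConv LinearMap
open Algebra.TensorProduct (includeLeft includeRight)

namespace LinearMap

section CoalgebraStruct

variable {R C A : Type*} [CommSemiring R] [AddCommMonoid C] [Module R C] [CoalgebraStruct R C]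
  [Semiring A] [Algebra R A]

lemma comp_algebraMap_convMul (φ : A →ₗ[R] R) (ψ : C →ₗ[R] R) (f : C →ₗ[R] A) :
    φ ∘ₗ (toConv (Algebra.linearMap R A ∘ₗ ψ) * toConv f).ofConv =
      (toConv ψ * toConv (φ ∘ₗ f)).ofConv := by
  ext c
  simp [(ℛ R c).convMul_apply, ← Algebra.smul_def]

lemma comp_convMul_algebraMap (φ : A →ₗ[R] R) (ψ : C →ₗ[R] R) (f : C →ₗ[R] A) :
    φ ∘ₗ (toConv f * toConv (Algebra.linearMap R A ∘ₗ ψ)).ofConv =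
      (toConv (φ ∘ₗ f) * toConv ψ).ofConv := by
  ext c
  simp [(ℛ R c).convMul_apply, ← Algebra.commutes, ← Algebra.smul_def, mul_comm]

end CoalgebraStruct

section Coalgebra

variable {R C A B : Type*} [CommSemiring R] [AddCommMonoid C] [Module R C] [Coalgebra R C]
  [Semiring A] [Algebra R A] [Semiring B] [Algebra R B]

noncomputable def convPostcomp (h : A →ₐ[R] B) :
    WithConv (C →ₗ[R] A) →+* WithConv (C →ₗ[R] B) where
  toFun f := toConv (h.toLinearMap ∘ₗ f.ofConv)
  map_one' := by ext; simp
  map_mul' f g := by rw [algHom_comp_convMul_distrib]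
  map_zero' := by ext; simp
  map_add' f g := by ext; simp

@[simp] lemma ofConv_convPostcomp (h : A →ₐ[R] B) (f : WithConv (C →ₗ[R] A)) :
    (convPostcomp h f).ofConv = h.toLinearMap ∘ₗ f.ofConv := rfl

lemma convPostcomp_includeLeft_mul_includeRight (f : C →ₗ[R] A) (g : C →ₗ[R] B) :
    convPostcomp includeLeft (toConv f) * convPostcomp includeRight (toConv g) =
      toConv (map f g ∘ₗ comul) := by
  ext c
  simp [(ℛ R c).convMul_apply, ← (ℛ R c).eq]

lemma convPostcomp_includeRight_mul_includeLeft (f : C →ₗ[R] A) (g : C →ₗ[R] B) :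
    convPostcomp includeRight (toConv g) * convPostcomp includeLeft (toConv f) =
      toConv (map f g ∘ₗ (TensorProduct.comm R C C).toLinearMap ∘ₗ comul) := by
  ext c
  simp [(ℛ R c).convMul_apply, ← (ℛ R c).eq]

lemma rid_comp_lTensor_comp_includeLeft_mul_includeRight_mul_includeLeft (φ : B →ₗ[R] R)
    (f h : C →ₗ[R] A) (g : C →ₗ[R] B) :
    toConv ((TensorProduct.rid R A).toLinearMap ∘ₗ φ.lTensor A ∘ₗ
      (convPostcomp includeLeft (toConv f) * convPostcomp includeRight (toConv g) *
        convPostcomp includeLeft (toConv h)).ofConv) =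
      toConv f * toConv (Algebra.linearMap R A ∘ₗ φ ∘ₗ g) * toConv h := by
  rw [convPostcomp_includeLeft_mul_includeRight]
  ext c
  simp only [comp_apply, (ℛ R c).convMul_apply]
  simp [(ℛ R ((ℛ R c).left _)).convMul_apply, ← (ℛ R ((ℛ R c).left _)).eq, Finset.sum_mul,
    Algebra.smul_def, Algebra.commutes, mul_assoc]

end Coalgebra

end LinearMap

namespace Bialgebra

variable {R A : Type*} [CommSemiring R] [Semiring A] [Bialgebra R A]

def IsLeftIntegral (φ : A →ₗ[R] R) : Prop :=
  toConv LinearMap.id * toConv (Algebra.linearMap R A ∘ₗ φ) = toConv (Algebra.linearMap R A ∘ₗ φ)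

def IsRightIntegral (φ : A →ₗ[R] R) : Prop :=
  toConv (Algebra.linearMap R A ∘ₗ φ) * toConv LinearMap.id = toConv (Algebra.linearMap R A ∘ₗ φ)

theorem rid_comp_lTensor_comp_comul (φ : A →ₗ[R] R) :
    (_root_.TensorProduct.rid R A).toLinearMap ∘ₗ φ.lTensor A ∘ₗ comul =
      (toConv LinearMap.id * toConv (Algebra.linearMap R A ∘ₗ φ)).ofConv := by
  ext a
  simp [(ℛ R a).convMul_apply, ← (ℛ R a).eq, Algebra.smul_def, Algebra.commutes]

end Bialgebra

namespace HopfAlgebra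

variable {R A : Type*} [CommSemiring R] [Semiring A] [HopfAlgebra R A]

theorem comul_comp_antipode :
    comul ∘ₗ antipode R =
      map (antipode R) (antipode R) ∘ₗ (TensorProduct.comm R A A).toLinearMap ∘ₗ comul := by
  have hT := convPostcomp_includeRight_mul_includeLeft (antipode R (A := A)) (antipode R)
  have hδ := convPostcomp_includeLeft_mul_includeRight (R := R) (LinearMap.id (M := A)) .id
  rw [map_id, LinearMap.id_comp] at hδ
  have hinv : toConv (map (antipode R) (antipode R) ∘ₗ (TensorProduct.comm R A A).toLinearMap ∘ₗ
      comul) * toConv comul = 1 := by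
    rw [← hT, ← hδ, mul_assoc, ← mul_assoc (convPostcomp includeLeft _), ← map_mul,
      antipode_mul_id, map_one, one_mul, ← map_mul, antipode_mul_id, map_one]
  exact congrArg ofConv (left_inv_eq_right_inv hinv comul_right_inv).symm

theorem comul_antipode (a : A) :
    comul (antipode R a) = map (antipode R) (antipode R) (TensorProduct.comm R A A (comul a)) :=
  congr($comul_comp_antipode a)

theorem comul_comp_antipode_comp_antipode :
    comul ∘ₗ antipode R ∘ₗ antipode R =
      map (antipode R ∘ₗ antipode R) (antipode R ∘ₗ antipode R) ∘ₗ comul (R := R) (A := A) := by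
  ext a
  simp [comul_antipode, ← (ℛ R a).eq, map_sum]

theorem convPostcomp_comulAlgHom_antipode :
    convPostcomp (Bialgebra.comulAlgHom R A) (toConv (antipode R)) =
      convPostcomp includeRight (toConv (antipode R)) *
        convPostcomp includeLeft (toConv (antipode R)) := by
  rw [convPostcomp_includeRight_mul_includeLeft, ← comul_comp_antipode]
  rfl

theorem convPostcomp_comulAlgHom_antipode_comp_antipode :
    convPostcomp (Bialgebra.comulAlgHom R A) (toConv (antipode R ∘ₗ antipode R)) =
      convPostcomp includeLeft (toConv (antipode R ∘ₗ antipode R)) *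
        convPostcomp includeRight (toConv (antipode R ∘ₗ antipode R)) := by
  rw [convPostcomp_includeLeft_mul_includeRight, ← comul_comp_antipode_comp_antipode]
  rfl

theorem antipode_comp_mul_comp_map_antipode_comm :
    antipode R ∘ₗ mul' R A ∘ₗ map LinearMap.id (antipode R) ∘ₗ
      (TensorProduct.comm R A A).toLinearMap ∘ₗ comul (R := R) (A := A) =
      (toConv (antipode R ∘ₗ antipode R) * toConv (antipode R) : WithConv (A →ₗ[R] A)).ofConv := by
  ext a
  simp [(ℛ R a).convMul_apply, ← (ℛ R a).eq, antipode_mul_antidistrib]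

theorem antipode_comp_antipode_of_convMul_eq_one
    (h : toConv (antipode R ∘ₗ antipode R) * toConv (antipode R) = (1 : WithConv (A →ₗ[R] A))) :
    antipode R ∘ₗ antipode R = LinearMap.id (R := R) (M := A) :=
  calc antipode R ∘ₗ antipode R
      = (toConv (antipode R ∘ₗ antipode R) * (toConv (antipode R) * toConv LinearMap.id) :
          WithConv (A →ₗ[R] A)).ofConv := by
        rw [antipode_mul_id, mul_one]
    _ = LinearMap.id := by rw [← mul_assoc, h, one_mul]

theorem convMul_algebraMap_comp_antipode {B : Type*} [Semiring B] [Algebra R B]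
    (f : A →ₗ[R] B) (φ : A →ₗ[R] R) :
    (toConv f * toConv (Algebra.linearMap R B ∘ₗ φ)).ofConv ∘ₗ antipode R =
      (toConv (Algebra.linearMap R B ∘ₗ φ ∘ₗ antipode R) * toConv (f ∘ₗ antipode R)).ofConv := by
  ext a
  simp [(ℛ R a).convMul_apply, comul_antipode, ← (ℛ R a).eq, Algebra.commutes]

end HopfAlgebra

namespace Bialgebra.IsLeftIntegral

variable {R A : Type*} [CommSemiring R] [Semiring A] [HopfAlgebra R A] {φ : A →ₗ[R] R}

theorem comp_antipode_convMul_antipode (hφ : IsLeftIntegral φ) :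
    toConv (Algebra.linearMap R A ∘ₗ φ ∘ₗ antipode R) * toConv (antipode R) =
      toConv (Algebra.linearMap R A ∘ₗ φ ∘ₗ antipode R) := by
  have h := congr(ofConv $hφ ∘ₗ antipode R)
  rw [convMul_algebraMap_comp_antipode, LinearMap.id_comp] at h
  exact congrArg toConv h

theorem isRightIntegral_comp_antipode (hφ : IsLeftIntegral φ) :
    IsRightIntegral (φ ∘ₗ antipode R) :=
  calc _ = toConv (Algebra.linearMap R A ∘ₗ φ ∘ₗ antipode R) * toConv (antipode R) *
        toConv LinearMap.id := by rw [hφ.comp_antipode_convMul_antipode]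
    _ = _ := by rw [mul_assoc, antipode_mul_id, mul_one]

theorem comp_antipode (hφ : IsLeftIntegral φ) (h1 : φ 1 = 1) : φ ∘ₗ antipode R = φ := by
  have hη : φ ∘ₗ Algebra.linearMap R A = LinearMap.id := by ext; simp [h1]
  have hηS : (φ ∘ₗ antipode R) ∘ₗ Algebra.linearMap R A = LinearMap.id := by
    ext; simp [h1, antipode_one]
  have hr := congr(φ ∘ₗ ofConv $(hφ.isRightIntegral_comp_antipode))
  have hl := congr((φ ∘ₗ antipode R) ∘ₗ ofConv $hφ)
  rw [comp_algebraMap_convMul, ofConv_toConv, ← comp_assoc, hη, id_comp, comp_id] at hr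
  rw [comp_convMul_algebraMap, ofConv_toConv, ← comp_assoc, hηS, id_comp, comp_id] at hl
  exact hr.symm.trans hl

theorem antipode_sq_convMul_antipode_eq_one (hφ : IsLeftIntegral φ)
    (hp : φ ∘ₗ (toConv (antipode R ∘ₗ antipode R) * toConv (antipode R) :
      WithConv (A →ₗ[R] A)).ofConv = counit) :
    toConv (antipode R ∘ₗ antipode R) * toConv (antipode R) = (1 : WithConv (A →ₗ[R] A)) := by
  set p : WithConv (A →ₗ[R] A) := toConv (antipode R ∘ₗ antipode R) * toConv (antipode R)
  have hδp : convPostcomp (Bialgebra.comulAlgHom R A) p =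
      convPostcomp includeLeft (toConv (antipode R ∘ₗ antipode R)) *
        convPostcomp includeRight (toConv p.ofConv) *
        convPostcomp includeLeft (toConv (antipode R)) := by
    rw [map_mul, convPostcomp_comulAlgHom_antipode, convPostcomp_comulAlgHom_antipode_comp_antipode,
      toConv_ofConv, map_mul (convPostcomp includeRight)]
    simp only [mul_assoc]
  have hφp : Algebra.linearMap R A ∘ₗ φ ∘ₗ p.ofConv = (1 : WithConv (A →ₗ[R] A)).ofConv := by
    rw [hp]; rfl
  have hintegral_at_p : (_root_.TensorProduct.rid R A).toLinearMap ∘ₗ φ.lTensor A ∘ₗ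
      (convPostcomp (Bialgebra.comulAlgHom R A) p).ofConv =
        Algebra.linearMap R A ∘ₗ φ ∘ₗ p.ofConv :=
    calc _ = ((_root_.TensorProduct.rid R A).toLinearMap ∘ₗ φ.lTensor A ∘ₗ comul) ∘ₗ p.ofConv := rfl
      _ = _ := by rw [rid_comp_lTensor_comp_comul, hφ]; rfl
  have hcontract := rid_comp_lTensor_comp_includeLeft_mul_includeRight_mul_includeLeft φ
    (antipode R ∘ₗ antipode R) (antipode R) p.ofConv
  rw [← hδp, hintegral_at_p, hφp, toConv_ofConv, mul_one] at hcontract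
  exact hcontract.symm

end Bialgebra.IsLeftIntegral

/-- `H` Hopf algebra over `k` with antipode `S`, and `λ` a left
integral for `H` in `H⁎` with `λ(h₂·S(h₁)) = ε(h)` for all `h`.  Then `λ(1) = 1` and
`H` is involutory. -/
theorem statement15
    (lam : H →ₗ[k] k)
    (hlaml : ∀ h : H, swr lam h = lam h • (1 : H))
    (hlam : ∀ h : H,
      lam ((LinearMap.mul' k H)
        ((TensorProduct.map LinearMap.id (HopfAlgebra.antipode (R := k)))
          ((TensorProduct.comm k H H) (Coalgebra.comul (R := k) h)))) =
      Coalgebra.counit (R := k) h) :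
    lam 1 = 1 ∧
      ∀ h : H, HopfAlgebra.antipode (R := k) (HopfAlgebra.antipode (R := k) h) = h := by
  have hunit : lam 1 = 1 := by
    simpa [Algebra.TensorProduct.one_def, antipode_one] using hlam 1
  have hleft : Bialgebra.IsLeftIntegral lam := by
    apply WithConv.ext
    rw [← Bialgebra.rid_comp_lTensor_comp_comul]
    ext h
    exact (hlaml h).trans (Algebra.algebraMap_eq_smul_one _).symm
  have hp : lam ∘ₗ (toConv (antipode k ∘ₗ antipode k) * toConv (antipode k) :
      WithConv (H →ₗ[k] H)).ofConv = counit := by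
    rw [← antipode_comp_mul_comp_map_antipode_comm, ← comp_assoc, hleft.comp_antipode hunit]
    exact LinearMap.ext hlam
  have hS2 :=
    antipode_comp_antipode_of_convMul_eq_one (hleft.antipode_sq_convMul_antipode_eq_one hp)
  exact ⟨hunit, fun h => congr($hS2 h)⟩
end
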